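/- Let P be a set of 9 points in ℙ³ lying on a pair of skew lines l₁, l₂ with exactly 4 points on l₁ (and 5 on l₂). Then P imposes independent conditions at the points of l₁ on cubic forms; in particular P does not satisfy the Cayley–Bacharach property CB(3). -/
import Mathlib


open MvPolynomial

noncomputable def linPoly (φ : Module.Dual ℂ (Fin 4 → ℂ)) : MvPolynomial (Fin 4) ℂ :=
  ∑ i, C (φ (Pi.single i 1)) * X i

lemma linPoly_homog (φ : Module.Dual ℂ (Fin 4 → ℂ)) : (linPoly φ).IsHomogeneous 1 := by
  apply MvPolynomial.IsHomogeneous.sum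
  intro i _
  simpa using (isHomogeneous_C _ (φ (Pi.single i 1))).mul (isHomogeneous_X ℂ i)

lemma eval_linPoly (φ : Module.Dual ℂ (Fin 4 → ℂ)) (v : Fin 4 → ℂ) :
    eval v (linPoly φ) = φ v := by
  rw [linPoly, map_sum]
  conv_rhs => rw [← Finset.univ_sum_single v, map_sum]
  refine Finset.sum_congr rfl fun i _ => ?_
  have h1 : Pi.single i (v i) = v i • (Pi.single i (1:ℂ) : Fin 4 → ℂ) := by
    rw [← Pi.single_smul, smul_eq_mul, mul_one]
  rw [h1, map_smul, smul_eq_mul]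
  simp [mul_comm]

/-- existence of a linear functional vanishing on a subspace, nonzero at a point -/
lemma exists_functional (p : Submodule ℂ (Fin 4 → ℂ)) {x : Fin 4 → ℂ} (hx : x ∉ p) :
    ∃ φ : Module.Dual ℂ (Fin 4 → ℂ), φ x ≠ 0 ∧ ∀ y ∈ p, φ y = 0 := by
  obtain ⟨φ, hφx, hφp⟩ := p.exists_dual_map_eq_bot_of_notMem hx inferInstance
  refine ⟨φ, hφx, fun y hy => ?_⟩
  have : φ y ∈ p.map φ := Submodule.mem_map_of_mem hy
  rw [hφp] at this
  simpa using this

lemma proj_rep_ne {p q : Projectivization ℂ (Fin 4 → ℂ)} (h : q ≠ p)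
    (hmem : p.rep ∈ Submodule.span ℂ {q.rep}) : False := by
  obtain ⟨c, hc⟩ := Submodule.mem_span_singleton.mp hmem
  have hc0 : c ≠ 0 := by
    rintro rfl
    exact p.rep_nonzero (by simpa using hc.symm)
  apply h
  have h2 : Projectivization.mk ℂ p.rep p.rep_nonzero
      = Projectivization.mk ℂ q.rep q.rep_nonzero := by
    rw [Projectivization.mk_eq_mk_iff]
    exact ⟨Units.mk0 c hc0, by simpa [Units.smul_def] using hc⟩
  simpa [Projectivization.mk_rep] using h2.symm

/-- Let `P` be a set of 9 points in `ℙ³` lying on a pair of skew lines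
`l₁, l₂` (projectivizations of 2-dimensional subspaces `W₁, W₂` with `W₁ ∩ W₂ = 0`), with
exactly 4 points on `l₁` and 5 on `l₂`. Then for each point `p ∈ P ∩ l₁` there is a cubic
form vanishing on `P \ {p}` but not at `p` (so `P` imposes independent conditions at the
points of `l₁` on cubics); in particular `P` does not satisfy the Cayley–Bacharach property
`CB(3)`. -/
theorem stmt_15 (W₁ W₂ : Submodule ℂ (Fin 4 → ℂ))
    (hW₁ : Module.finrank ℂ W₁ = 2) (hW₂ : Module.finrank ℂ W₂ = 2)
    (hskew : W₁ ⊓ W₂ = ⊥)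
    (P : Finset (Projectivization ℂ (Fin 4 → ℂ))) (hP : P.card = 9)
    (hcover : ∀ p ∈ P, p.rep ∈ W₁ ∨ p.rep ∈ W₂)
    (hP₁ : {q ∈ (P : Set (Projectivization ℂ (Fin 4 → ℂ))) | q.rep ∈ W₁}.ncard = 4)
    (hP₂ : {q ∈ (P : Set (Projectivization ℂ (Fin 4 → ℂ))) | q.rep ∈ W₂}.ncard = 5) :
    (∀ p ∈ P, p.rep ∈ W₁ →
      ∃ f : MvPolynomial (Fin 4) ℂ, f.IsHomogeneous 3 ∧
        (∀ q ∈ P, q ≠ p → eval q.rep f = 0) ∧ eval p.rep f ≠ 0) ∧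
    ¬ (∀ p ∈ P, ∀ f : MvPolynomial (Fin 4) ℂ, f.IsHomogeneous 3 →
        (∀ q ∈ P, q ≠ p → eval q.rep f = 0) → eval p.rep f = 0) := by
  classical
  -- translate ncard hypothesis to finset card
  have hset : {q ∈ (P : Set (Projectivization ℂ (Fin 4 → ℂ))) | q.rep ∈ W₁}
      = ↑(P.filter (fun q => q.rep ∈ W₁)) := by
    ext q; simp [and_comm]
  rw [hset, Set.ncard_coe_finset] at hP₁
  have main : ∀ p ∈ P, p.rep ∈ W₁ →
      ∃ f : MvPolynomial (Fin 4) ℂ, f.IsHomogeneous 3 ∧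
        (∀ q ∈ P, q ≠ p → eval q.rep f = 0) ∧ eval p.rep f ≠ 0 := by
    intro p hpP hpW₁
    set S : Finset (Projectivization ℂ (Fin 4 → ℂ)) :=
      (P.filter (fun q => q.rep ∈ W₁)).erase p with hS
    have hpmem : p ∈ P.filter (fun q => q.rep ∈ W₁) := by
      simp [hpP, hpW₁]
    have hScard : S.card = 3 := by
      rw [hS, Finset.card_erase_of_mem hpmem, hP₁]
    have hSne : S.Nonempty := by
      rw [← Finset.card_pos, hScard]; norm_num
    obtain ⟨q₁, hq₁⟩ := hSne
    have hq₁W₁ : q₁.rep ∈ W₁ := (Finset.mem_filter.mp (Finset.mem_of_mem_erase hq₁)).2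
    have hq₁ne : q₁ ≠ p := Finset.ne_of_mem_erase hq₁
    -- functional vanishing on W₂ ⊔ span q₁.rep, nonzero at p
    have hpnot : p.rep ∉ W₂ ⊔ Submodule.span ℂ {q₁.rep} := by
      intro hmem
      rw [Submodule.mem_sup] at hmem
      obtain ⟨w, hw, z, hz, hwz⟩ := hmem
      obtain ⟨c, rfl⟩ := Submodule.mem_span_singleton.mp hz
      have hwW₁ : w ∈ W₁ := by
        have : w = p.rep - c • q₁.rep := by rw [← hwz]; abel
        rw [this]
        exact W₁.sub_mem hpW₁ (W₁.smul_mem c hq₁W₁)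
      have : w ∈ W₁ ⊓ W₂ := ⟨hwW₁, hw⟩
      rw [hskew, Submodule.mem_bot] at this
      subst this
      apply proj_rep_ne hq₁ne
      rw [← hwz]
      simpa using Submodule.smul_mem _ c (Submodule.mem_span_singleton_self q₁.rep)
    obtain ⟨φ₀, hφ₀p, hφ₀van⟩ := exists_functional _ hpnot
    -- functionals for the other points of S
    have hfun : ∀ q ∈ S.erase q₁,
        ∃ φ : Module.Dual ℂ (Fin 4 → ℂ), φ p.rep ≠ 0 ∧ φ q.rep = 0 := by
      intro q hq
      have hqne : q ≠ p := Finset.ne_of_mem_erase (Finset.mem_of_mem_erase hq)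
      have : p.rep ∉ Submodule.span ℂ {q.rep} := fun h => proj_rep_ne hqne h
      obtain ⟨φ, hφp, hφq⟩ := exists_functional _ this
      exact ⟨φ, hφp, hφq _ (Submodule.mem_span_singleton_self _)⟩
    choose φ hφp hφq using hfun
    -- the cubic
    refine ⟨linPoly φ₀ * ∏ q ∈ (S.erase q₁).attach, linPoly (φ q q.2), ?_, ?_, ?_⟩
    · have h1 : ((S.erase q₁).attach).card = 2 := by
        rw [Finset.card_attach, Finset.card_erase_of_mem hq₁, hScard]
      have hprod : (∏ q ∈ (S.erase q₁).attach, linPoly (φ q q.2)).IsHomogeneous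
          (∑ _q ∈ (S.erase q₁).attach, 1) :=
        IsHomogeneous.prod _ _ _ (fun q _ => linPoly_homog _)
      have := (linPoly_homog φ₀).mul hprod
      rwa [Finset.sum_const, h1, smul_eq_mul] at this
    · intro q hqP hqne
      rw [map_mul, map_prod]
      rcases hcover q hqP with hq1 | hq2
      · -- q on l₁: q ∈ S
        have hqS : q ∈ S := Finset.mem_erase.mpr ⟨hqne, Finset.mem_filter.mpr ⟨hqP, hq1⟩⟩
        by_cases hq : q = q₁
        · subst hq
          have : eval q.rep (linPoly φ₀) = 0 := by
            rw [eval_linPoly]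
            exact hφ₀van _ (Submodule.mem_sup_right (Submodule.mem_span_singleton_self _))
          rw [this, zero_mul]
        · have hqS' : q ∈ S.erase q₁ := Finset.mem_erase.mpr ⟨hq, hqS⟩
          have : ∏ r ∈ (S.erase q₁).attach, eval q.rep (linPoly (φ r r.2)) = 0 := by
            apply Finset.prod_eq_zero
              (i := (⟨q, hqS'⟩ : {x // x ∈ S.erase q₁})) (Finset.mem_attach _ _)
            rw [eval_linPoly]; exact hφq q hqS'
          rw [this, mul_zero]
      · -- q on l₂
        have : eval q.rep (linPoly φ₀) = 0 := by
          rw [eval_linPoly]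
          exact hφ₀van _ (Submodule.mem_sup_left hq2)
        rw [this, zero_mul]
    · rw [map_mul, map_prod]
      apply mul_ne_zero
      · rw [eval_linPoly]; exact hφ₀p
      · apply Finset.prod_ne_zero_iff.mpr
        intro q _
        rw [eval_linPoly]; exact hφp q q.2
  refine ⟨main, fun hcb => ?_⟩
  have hne : (P.filter (fun q => q.rep ∈ W₁)).Nonempty := by
    rw [← Finset.card_pos, hP₁]; norm_num
  obtain ⟨p, hp⟩ := hne
  obtain ⟨hpP, hpW₁⟩ := Finset.mem_filter.mp hp
  obtain ⟨f, hf3, hfvan, hfp⟩ := main p hpP hpW₁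
  exact hfp (hcb p hpP f hf3 hfvan)
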